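/- arXiv:1612.00619 — 4 statements merged into one kernel-verified Lean document; each statement's English description precedes it below -/
import Mathlib

section
/- For any positive semidefinite operator (or positive semidefinite matrix) P and any unitary matrix U on a finite-dimensional Hilbert space, and any positive integer ℓ, one has Tr((PU)^ℓ (U* P)^ℓ) ≤ Tr(P^{2ℓ}). -/
open Matrix ComplexOrder

/-!
Put `Y_j = U^j P U^{-j}`. Then `(PU)^ℓ = Y_0 ⋯ Y_{ℓ-1} U^ℓ`, so the left side is
`|Tr(Y_0 ⋯ Y_{ℓ-1} Y_{ℓ-1} ⋯ Y_0)|`, the trace of a word of length `2ℓ` in Hermitian letters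
with `Tr(Y_j^{2ℓ}) = Tr(P^{2ℓ})`. On such words `w ↦ |Tr w|` is invariant under rotation and
obeys the Cauchy–Schwarz inequality `|Tr(pq)|² ≤ Tr(p p^R) Tr(q q^R)` for halves `p, q`
(`p^R` the reversed word). This forces a chessboard estimate: rotating and reflecting a
maximiser of the form `a^b t` produces a maximiser `a^{2b} t'`, so some constant word `a^{2ℓ}`
is a maximiser.
-/

structure IsReflectionPositive {ι : Type*} (f : List ι → ℝ) (N : ℕ) : Prop where
  nonneg : ∀ w, 0 ≤ f w
  append_comm : ∀ p q, f (p ++ q) = f (q ++ p)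
  sq_le : ∀ p q, p.length = N → q.length = N →
    f (p ++ q) ^ 2 ≤ f (p ++ p.reverse) * f (q ++ q.reverse)

namespace IsReflectionPositive

open List

variable {ι : Type*} {f : List ι → ℝ} {N : ℕ} {M : ℝ}

theorem apply_append_reverse_eq (hf : IsReflectionPositive f N)
    (hM : ∀ w, w.length = 2 * N → f w ≤ M) {p q : List ι} (hp : p.length = N)
    (hq : q.length = N) (hpq : f (p ++ q) = M) : f (p ++ p.reverse) = M := by
  have hpp := hM (p ++ p.reverse) (by simp [hp, two_mul])
  have hqq := hM (q ++ q.reverse) (by simp [hq, two_mul])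
  have hsq := hf.sq_le p q hp hq
  have hpp₀ := hf.nonneg (p ++ p.reverse)
  rw [hpq] at hsq
  nlinarith

theorem exists_replicate_two_mul_append_eq (hf : IsReflectionPositive f N)
    (hM : ∀ w, w.length = 2 * N → f w ≤ M) {b : ℕ} {a : ι} {t : List ι} (hbN : b < N)
    (ht : (replicate b a ++ t).length = 2 * N) (h : f (replicate b a ++ t) = M) :
    ∃ t', (replicate (2 * b) a ++ t').length = 2 * N ∧ f (replicate (2 * b) a ++ t') = M := by
  set s := t.drop N
  have hs : s.length = N - b := by simp [s]; simp at ht; omega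
  have hrot : f ((s ++ replicate b a) ++ t.take N) = M := by
    rw [append_assoc, hf.append_comm, append_assoc, take_append_drop, h]
  have hrefl := hf.apply_append_reverse_eq hM (by simp [hs]; omega)
    (by simp; simp at ht; omega) hrot
  refine ⟨s.reverse ++ s, by simp [hs]; omega, ?_⟩
  rw [← hrefl, reverse_append, reverse_replicate, append_assoc, hf.append_comm s, two_mul,
    replicate_add]
  simp only [append_assoc]

theorem apply_replicate_eq (hf : IsReflectionPositive f N)
    (hM : ∀ w, w.length = 2 * N → f w ≤ M) {b : ℕ} {a : ι} {t : List ι} (hb : 0 < b)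
    (ht : (replicate b a ++ t).length = 2 * N) (h : f (replicate b a ++ t) = M) :
    f (replicate (2 * N) a) = M := by
  rcases lt_or_ge b N with hbN | hNb
  · obtain ⟨t', ht', h'⟩ := hf.exists_replicate_two_mul_append_eq hM hbN ht h
    exact hf.apply_replicate_eq hM (by omega) ht' h'
  · have hsplit : replicate b a ++ t = replicate N a ++ (replicate (b - N) a ++ t) := by
      rw [← append_assoc, ← replicate_add, Nat.add_sub_cancel' hNb]
    rw [hsplit] at h
    have hrefl := hf.apply_append_reverse_eq hM (by simp) (by simp at ht ⊢; omega) h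
    rwa [reverse_replicate, ← replicate_add, ← two_mul] at hrefl
termination_by N - b

theorem exists_le_apply_replicate [Finite ι] (hf : IsReflectionPositive f N) (hN : 0 < N)
    (w : List ι) (hw : w.length = 2 * N) : ∃ a, f w ≤ f (replicate (2 * N) a) := by
  obtain ⟨w₀, hw₀, hmax⟩ := Set.exists_max_image _ f (finite_length_eq ι (2 * N)) ⟨w, hw⟩
  obtain ⟨a, t, rfl⟩ : ∃ a t, w₀ = a :: t :=
    exists_cons_of_length_pos (by simp at hw₀; omega)
  refine ⟨a, (hmax w hw).trans_eq ?_⟩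
  exact (hf.apply_replicate_eq hmax one_pos hw₀ rfl).symm

end IsReflectionPositive

theorem star_prod_map_of_isSelfAdjoint {ι R : Type*} [Monoid R] [StarMul R] {X : ι → R}
    (hX : ∀ a, IsSelfAdjoint (X a)) (w : List ι) :
    star (w.map X).prod = (w.reverse.map X).prod := by
  induction w with
  | nil => simp
  | cons a w ih => simp [ih, (hX a).star_eq]

namespace Unitary

variable {R : Type*} [Monoid R] [StarMul R]

theorem mul_pow_eq_prod_conj_mul (x : R) (u : unitary R) (m : ℕ) :
    (x * u) ^ m = ((List.range m).map fun j => (↑(u ^ j) * x * star ↑(u ^ j) : R)).prod *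
      ↑(u ^ m) := by
  induction m with
  | zero => simp
  | succ m ih =>
    rw [pow_succ, ih, List.range_succ, List.map_append, List.prod_append, pow_succ]
    simp only [List.map_cons, List.map_nil, List.prod_cons, List.prod_nil, mul_one, mul_assoc,
      Submonoid.coe_mul]
    rw [← mul_assoc (star _), coe_star_mul_self, one_mul]

theorem mul_pow_mul_star_eq_prod {x : R} (hx : IsSelfAdjoint x) (u : unitary R) (m : ℕ) :
    (x * u) ^ m * star ((x * u) ^ m) =
      ((List.range m ++ (List.range m).reverse).map
        fun j => (↑(u ^ j) * x * star ↑(u ^ j) : R)).prod := by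
  rw [mul_pow_eq_prod_conj_mul, star_mul, mul_assoc, ← mul_assoc (↑(u ^ m) : R),
    mul_star_self_of_mem (u ^ m).2, one_mul,
    star_prod_map_of_isSelfAdjoint fun j => hx.conjugate _, List.map_append, List.prod_append]

end Unitary

namespace Matrix

variable {𝕜 m : Type*} [RCLike 𝕜] [Fintype m]

theorem PosSemidef.re_trace_eq_norm {A : Matrix m m 𝕜} (hA : A.PosSemidef) :
    RCLike.re A.trace = ‖A.trace‖ := by
  have h := congrArg RCLike.re (RCLike.norm_of_nonneg' hA.trace_nonneg)
  rwa [RCLike.ofReal_re, eq_comm] at h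

variable [DecidableEq m]

theorem trace_conjStarAlgAut (u : unitary (Matrix m m 𝕜)) (A : Matrix m m 𝕜) :
    (Unitary.conjStarAlgAut 𝕜 _ u A).trace = A.trace := by
  rw [Unitary.conjStarAlgAut_apply, trace_mul_cycle, Unitary.coe_star_mul_self, one_mul]

theorem norm_trace_mul_sq_le (A B : Matrix m m 𝕜) :
    ‖(A * B).trace‖ ^ 2 ≤ RCLike.re (A * Aᴴ).trace * RCLike.re (B * Bᴴ).trace := by
  let := toMatrixSeminormedAddCommGroup (1 : Matrix m m 𝕜) PosSemidef.one
  let := toMatrixInnerProductSpace (1 : Matrix m m 𝕜) PosSemidef.one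
  have hinner : ∀ X Y : Matrix m m 𝕜, inner 𝕜 X Y = (Y * Xᴴ).trace := fun X Y => by
    change (Y * 1 * Xᴴ).trace = _
    rw [mul_one]
  have h := inner_mul_inner_self_le (𝕜 := 𝕜) Bᴴ A
  rw [hinner, hinner, hinner, hinner, conjTranspose_conjTranspose, ← conjTranspose_mul,
    trace_conjTranspose, norm_star, trace_mul_comm Bᴴ] at h
  rw [sq, mul_comm (RCLike.re _)]
  exact h

theorem isReflectionPositive_norm_trace_prod {ι : Type*} {X : ι → Matrix m m 𝕜}
    (hX : ∀ a, IsSelfAdjoint (X a)) (N : ℕ) :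
    IsReflectionPositive (fun w => ‖(w.map X).prod.trace‖) N where
  nonneg _ := norm_nonneg _
  append_comm p q := by
    rw [List.map_append, List.map_append, List.prod_append, List.prod_append, trace_mul_comm]
  sq_le p q _ _ := by
    simp only [List.map_append, List.prod_append, ← star_prod_map_of_isSelfAdjoint hX,
      star_eq_conjTranspose, ← (posSemidef_self_mul_conjTranspose _).re_trace_eq_norm]
    exact norm_trace_mul_sq_le _ _

end Matrix

theorem trace_PU_pow_le {n : ℕ} (P U : Matrix (Fin n) (Fin n) ℂ)
    (hP : P.PosSemidef) (hU : U ∈ Matrix.unitaryGroup (Fin n) ℂ)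
    (ℓ : ℕ) (hℓ : 0 < ℓ) :
    (((P * U) ^ ℓ * (Uᴴ * P) ^ ℓ).trace).re ≤ ((P ^ (2 * ℓ)).trace).re := by
  let u : unitary (Matrix (Fin n) (Fin n) ℂ) := ⟨U, hU⟩
  let X (j : Fin ℓ) : Matrix (Fin n) (Fin n) ℂ := Unitary.conjStarAlgAut ℂ _ (u ^ (j : ℕ)) P
  have hX (j : Fin ℓ) : IsSelfAdjoint (X j) := hP.isHermitian.isSelfAdjoint.map _
  have hadj : (Uᴴ * P) ^ ℓ = ((P * U) ^ ℓ)ᴴ := by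
    rw [conjTranspose_pow, conjTranspose_mul, hP.isHermitian.eq]
  have hword : (P * U) ^ ℓ * (Uᴴ * P) ^ ℓ =
      ((List.finRange ℓ ++ (List.finRange ℓ).reverse).map X).prod := by
    rw [hadj, ← star_eq_conjTranspose, show U = ↑u from rfl,
      Unitary.mul_pow_mul_star_eq_prod hP.isHermitian.isSelfAdjoint,
      ← List.map_coe_finRange_eq_range, ← List.map_reverse, ← List.map_append, List.map_map]
    rfl
  obtain ⟨a, ha⟩ := (isReflectionPositive_norm_trace_prod hX ℓ).exists_le_apply_replicate hℓ
    (List.finRange ℓ ++ (List.finRange ℓ).reverse) (by simp [two_mul])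
  rw [List.map_replicate, List.prod_replicate, ← map_pow, trace_conjStarAlgAut, ← hword] at ha
  calc (((P * U) ^ ℓ * (Uᴴ * P) ^ ℓ).trace).re
      = ‖((P * U) ^ ℓ * (Uᴴ * P) ^ ℓ).trace‖ := by
        rw [hadj]
        exact (posSemidef_self_mul_conjTranspose ((P * U) ^ ℓ)).re_trace_eq_norm
    _ ≤ ‖(P ^ (2 * ℓ)).trace‖ := ha
    _ = ((P ^ (2 * ℓ)).trace).re := (hP.pow _).re_trace_eq_norm.symm
end

section
/- For all real numbers a, b and q > 0 with |a| ≤ qJ for some J > 0, one has cosh(a - b) - 1 ≤ (cosh|b| - 1) + ((cosh(qJ) - 1)/(qJ)^2) · a^2 · cosh|b| + (sinh(qJ)/(qJ)) · |a| · sinh|b|. -/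
lemma convexOn_sinh_Ici : ConvexOn ℝ (Set.Ici (0:ℝ)) Real.sinh := by
  apply convexOn_of_deriv2_nonneg (convex_Ici 0) Real.continuous_sinh.continuousOn
  · exact Real.differentiable_sinh.differentiableOn
  · simp only [Real.deriv_sinh]
    exact Real.differentiable_cosh.differentiableOn
  · intro x hx
    simp only [Function.iterate_succ, Function.iterate_zero, Function.comp_apply, id,
      Real.deriv_sinh, Real.deriv_cosh]
    rw [interior_Ici, Set.mem_Ioi] at hx
    exact Real.sinh_nonneg_iff.mpr hx.le

lemma sinh_le_slope (s T : ℝ) (hs : 0 ≤ s) (hsT : s ≤ T) (hT : 0 < T) :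
    Real.sinh s ≤ (s / T) * Real.sinh T := by
  have h := convexOn_sinh_Ici.2 (Set.mem_Ici.mpr (le_refl (0:ℝ)))
    (Set.mem_Ici.mpr (hs.trans hsT))
    (show (0:ℝ) ≤ 1 - s / T by
      have : s / T ≤ 1 := (div_le_one hT).mpr hsT; linarith)
    (div_nonneg hs hT.le) (by ring)
  simpa [Real.sinh_zero, smul_eq_mul, mul_div_cancel₀, hT.ne'] using h

lemma cosh_sub_one_le (s T : ℝ) (hs : 0 ≤ s) (hsT : s ≤ T) (hT : 0 < T) :
    Real.cosh s - 1 ≤ (Real.cosh T - 1) / T ^ 2 * s ^ 2 := by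
  have key : ∀ t : ℝ, Real.cosh t - 1 = 2 * Real.sinh (t / 2) ^ 2 := by
    intro t
    have := Real.cosh_two_mul (t / 2)
    have h2 := Real.cosh_sq (t / 2)
    rw [show 2 * (t / 2) = t by ring] at this
    nlinarith
  have hsinh : Real.sinh (s / 2) ≤ (s / T) * Real.sinh (T / 2) := by
    have := sinh_le_slope (s / 2) (T / 2) (by linarith) (by linarith) (by linarith)
    have heq : s / 2 / (T / 2) = s / T := by
      rw [div_div_div_cancel_right₀] ; norm_num
    rwa [heq] at this
  have h1 : 0 ≤ Real.sinh (s / 2) := Real.sinh_nonneg_iff.mpr (by linarith)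
  have hsq : Real.sinh (s / 2) ^ 2 ≤ ((s / T) * Real.sinh (T / 2)) ^ 2 := by
    apply sq_le_sq' (by linarith) hsinh
  rw [key s, key T]
  calc 2 * Real.sinh (s / 2) ^ 2 ≤ 2 * ((s / T) * Real.sinh (T / 2)) ^ 2 := by linarith
    _ = 2 * Real.sinh (T / 2) ^ 2 / T ^ 2 * s ^ 2 := by
        field_simp

theorem cosh_sub_bound (a b q J : ℝ) (hq : 0 < q) (hJ : 0 < J) (ha : |a| ≤ q * J) :
    Real.cosh (a - b) - 1 ≤
      (Real.cosh |b| - 1)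
      + ((Real.cosh (q * J) - 1) / (q * J) ^ 2) * a ^ 2 * Real.cosh |b|
      + (Real.sinh (q * J) / (q * J)) * |a| * Real.sinh |b| := by
  set T := q * J with hT
  have hT0 : 0 < T := mul_pos hq hJ
  have habs : 0 ≤ |a| := abs_nonneg a
  -- step 1: cosh(a-b) ≤ cosh|a| cosh|b| + sinh|a| sinh|b|
  have step1 : Real.cosh (a - b) ≤
      Real.cosh |a| * Real.cosh |b| + Real.sinh |a| * Real.sinh |b| := by
    rw [Real.cosh_sub]
    have h1 : -(Real.sinh a * Real.sinh b) ≤ Real.sinh |a| * Real.sinh |b| := by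
      calc -(Real.sinh a * Real.sinh b) ≤ |Real.sinh a * Real.sinh b| := neg_le_abs _
        _ = Real.sinh |a| * Real.sinh |b| := by
            rw [abs_mul, Real.abs_sinh, Real.abs_sinh]
    rw [Real.cosh_abs, Real.cosh_abs]
    linarith
  -- step 2: cosh|a| - 1 ≤ ((cosh T - 1)/T²) a²
  have step2 : Real.cosh |a| - 1 ≤ (Real.cosh T - 1) / T ^ 2 * a ^ 2 := by
    have := cosh_sub_one_le |a| T habs ha hT0
    rwa [sq_abs] at this
  -- step 3: sinh|a| ≤ (sinh T / T) |a|
  have step3 : Real.sinh |a| ≤ Real.sinh T / T * |a| := by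
    have := sinh_le_slope |a| T habs ha hT0
    calc Real.sinh |a| ≤ |a| / T * Real.sinh T := this
      _ = Real.sinh T / T * |a| := by ring
  have hcoshb : (0:ℝ) ≤ Real.cosh |b| := (Real.cosh_pos _).le
  have hsinhb : (0:ℝ) ≤ Real.sinh |b| := Real.sinh_nonneg_iff.mpr (abs_nonneg b)
  have h2 : (Real.cosh |a| - 1) * Real.cosh |b| ≤
      (Real.cosh T - 1) / T ^ 2 * a ^ 2 * Real.cosh |b| :=
    mul_le_mul_of_nonneg_right step2 hcoshb
  have h3 : Real.sinh |a| * Real.sinh |b| ≤ Real.sinh T / T * |a| * Real.sinh |b| :=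
    mul_le_mul_of_nonneg_right step3 hsinhb
  nlinarith [Real.one_le_cosh |b|]
end

section
/- For D = 3: there exist constants c > 0 and C ≥ 0 such that for every u ∈ ℝ³ with |u| ≥ 1 and every K > 0 fixed, ∫_{|k| ≤ K} (sin²(k·u)/|k|⁴) dk ≥ c|u| - C, where the integral is over the ball of radius K in ℝ³. -/
/-!
Let `I(u, K)` be the integral over the ball of radius `K`. Writing `u = r • v` with `r = ‖u‖ ≥ 1`
and `‖v‖ = 1`, the substitution `k = r⁻¹ • x` gives `r ^ n * I(u, K) = r ^ 4 * I(v, r K)` in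
dimension `n`. The integrand is nonnegative, so enlarging the ball only increases the integral,
and rotation invariance makes `I(v, K)` independent of the unit vector `v`. In dimension three
this yields `I(u, K) ≥ ‖u‖ * I(e, K)`, with `C = 0`.
All integrals are finite because `sin² ⟪k, u⟫ / ‖k‖⁴ ≤ ‖u‖² ‖k‖⁻²` and `2 < n`.
-/

open MeasureTheory
open scoped RealInnerProductSpace Pointwise
open Metric Module Real

section

variable {E : Type*} [NormedAddCommGroup E] [InnerProductSpace ℝ E]

lemma sin_sq_inner_div_norm_pow_four_le (u k : E) :
    sin ⟪k, u⟫ ^ 2 / ‖k‖ ^ 4 ≤ ‖u‖ ^ 2 * ‖k‖ ^ (-2 : ℝ) := by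
  rcases eq_or_ne k 0 with rfl | hk
  · simp
  have hk : 0 < ‖k‖ := norm_pos_iff.2 hk
  have h_inner : sin ⟪k, u⟫ ^ 2 ≤ (‖k‖ * ‖u‖) ^ 2 :=
    sin_sq_le_sq.trans (sq_le_sq.2 (by simpa using abs_real_inner_le_norm k u))
  rw [rpow_neg hk.le, rpow_two, div_le_iff₀ (by positivity)]
  exact h_inner.trans_eq (by field_simp)

variable [FiniteDimensional ℝ E] [MeasurableSpace E] [BorelSpace E]

noncomputable def sinSqIntegral (μ : Measure E) (u : E) (K : ℝ) : ℝ :=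
  ∫ k in closedBall 0 K, sin ⟪k, u⟫ ^ 2 / ‖k‖ ^ 4 ∂μ

variable {μ : Measure E} [μ.IsAddHaarMeasure]

lemma integrableOn_sin_sq_inner_div_norm_pow_four (hE : 2 < finrank ℝ E) (u : E) (K : ℝ) :
    IntegrableOn (fun k ↦ sin ⟪k, u⟫ ^ 2 / ‖k‖ ^ 4) (closedBall 0 K) μ := by
  refine LocallyIntegrable.integrableOn_isCompact ?_ (isCompact_closedBall 0 K)
  refine locallyIntegrable_of_norm_le_rpow (by omega) (α := 2) (C := ‖u‖ ^ 2)
    (by exact_mod_cast hE) (ae_of_all _ fun k ↦ ?_)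
    ((by fun_prop : Measurable fun k : E ↦ sin ⟪k, u⟫ ^ 2).div (by fun_prop)).aestronglyMeasurable
  rw [norm_of_nonneg (by positivity)]
  exact sin_sq_inner_div_norm_pow_four_le u k

lemma sinSqIntegral_smul {r : ℝ} (hr : 0 < r) (v : E) (K : ℝ) :
    r ^ finrank ℝ E * sinSqIntegral μ (r • v) K = r ^ 4 * sinSqIntegral μ v (r * K) := by
  have h_ball : r⁻¹ • closedBall (0 : E) (r * K) = closedBall 0 K := by
    rw [smul_closedBall' (by positivity), smul_zero, norm_inv, norm_of_nonneg hr.le,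
      inv_mul_cancel_left₀ hr.ne']
  have h_integrand (x : E) :
      sin ⟪r⁻¹ • x, r • v⟫ ^ 2 / ‖r⁻¹ • x‖ ^ 4 = r ^ 4 * (sin ⟪x, v⟫ ^ 2 / ‖x‖ ^ 4) := by
    rw [real_inner_smul_left, real_inner_smul_right, inv_mul_cancel_left₀ hr.ne', norm_smul,
      norm_inv, norm_of_nonneg hr.le]
    rcases eq_or_ne x 0 with rfl | hx
    · simp
    · field_simp [norm_ne_zero_iff.2 hx]
  have := Measure.setIntegral_comp_smul_of_pos μ (fun k ↦ sin ⟪k, r • v⟫ ^ 2 / ‖k‖ ^ 4)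
    (closedBall 0 (r * K)) (inv_pos.2 hr)
  simp only [h_integrand, integral_const_mul, h_ball, inv_pow, inv_inv, smul_eq_mul] at this
  rw [sinSqIntegral, sinSqIntegral, this]

lemma sinSqIntegral_mono (hE : 2 < finrank ℝ E) (v : E) {K K' : ℝ} (hK : K ≤ K') :
    sinSqIntegral μ v K ≤ sinSqIntegral μ v K' :=
  setIntegral_mono_set (integrableOn_sin_sq_inner_div_norm_pow_four hE v K')
    (ae_of_all _ fun _ ↦ by positivity) (closedBall_subset_closedBall hK).eventuallyLE

lemma sinSqIntegral_pos (hE : 2 < finrank ℝ E) {v : E} (hv : v ≠ 0) {K : ℝ} (hK : 0 < K) :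
    0 < sinSqIntegral μ v K := by
  rw [sinSqIntegral, setIntegral_pos_iff_support_of_nonneg_ae (ae_of_all _ fun _ ↦ by positivity)
    (integrableOn_sin_sq_inner_div_norm_pow_four hE v K)]
  set U := {x : E | sin ⟪x, v⟫ ≠ 0} ∩ ball 0 K
  have hU_open : IsOpen U :=
    (isOpen_ne_fun (by fun_prop) continuous_const).inter isOpen_ball
  have hU_sub : U ⊆ Function.support (fun k ↦ sin ⟪k, v⟫ ^ 2 / ‖k‖ ^ 4) ∩ closedBall 0 K := by
    rintro x ⟨hx_sin, hx_ball⟩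
    have hx : x ≠ 0 := by rintro rfl; simp at hx_sin
    exact ⟨div_ne_zero (pow_ne_zero _ hx_sin) (by positivity), ball_subset_closedBall hx_ball⟩
  have hv' : 0 < ‖v‖ := norm_pos_iff.2 hv
  set t := min (π / ‖v‖ ^ 2) (K / ‖v‖) / 2
  have ht : 0 < t := by positivity
  have ht_lt : t < min (π / ‖v‖ ^ 2) (K / ‖v‖) := half_lt_self (by positivity)
  have hU_ne : t • v ∈ U := by
    refine ⟨?_, ?_⟩
    · have h_lt : t * ‖v‖ ^ 2 < π :=
        (lt_div_iff₀ (by positivity)).1 (ht_lt.trans_le (min_le_left ..))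
      change sin ⟪t • v, v⟫ ≠ 0
      rw [real_inner_smul_left, real_inner_self_eq_norm_sq]
      exact (sin_pos_of_pos_of_lt_pi (by positivity) h_lt).ne'
    · rw [mem_ball_zero_iff, norm_smul, norm_of_nonneg ht.le]
      exact (lt_div_iff₀ hv').1 (ht_lt.trans_le (min_le_right ..))
  exact (hU_open.measure_pos μ ⟨_, hU_ne⟩).trans_le (measure_mono hU_sub)

lemma sinSqIntegral_eq_of_norm_eq {v w : E} (h : ‖v‖ = ‖w‖) (K : ℝ) :
    sinSqIntegral volume v K = sinSqIntegral volume w K := by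
  let T : E ≃ₗᵢ[ℝ] E := Submodule.reflection (ℝ ∙ (w - v))ᗮ
  have hT : T w = v := Submodule.reflection_sub h.symm
  have h_ball : T ⁻¹' closedBall 0 K = closedBall 0 K := by
    ext x; simp
  have := T.measurePreserving.setIntegral_preimage_emb T.toHomeomorph.measurableEmbedding
    (fun k ↦ sin ⟪k, v⟫ ^ 2 / ‖k‖ ^ 4) (closedBall 0 K)
  rw [sinSqIntegral, sinSqIntegral, ← this, h_ball]
  refine setIntegral_congr_fun measurableSet_closedBall fun x _ ↦ ?_
  rw [← hT, T.inner_map_map, T.norm_map]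

lemma norm_pow_four_mul_sinSqIntegral_le (hE : 2 < finrank ℝ E) {e u : E} (he : ‖e‖ = 1)
    (hu : 1 ≤ ‖u‖) {K : ℝ} (hK : 0 ≤ K) :
    ‖u‖ ^ 4 * sinSqIntegral volume e K ≤ ‖u‖ ^ finrank ℝ E * sinSqIntegral volume u K := by
  have hu0 : 0 < ‖u‖ := one_pos.trans_le hu
  set v := ‖u‖⁻¹ • u
  have hv : ‖v‖ = 1 := by rw [norm_smul, norm_inv, norm_norm, inv_mul_cancel₀ hu0.ne']
  have huv : ‖u‖ • v = u := smul_inv_smul₀ hu0.ne' u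
  calc ‖u‖ ^ 4 * sinSqIntegral volume e K
      = ‖u‖ ^ 4 * sinSqIntegral volume v K := by
        rw [sinSqIntegral_eq_of_norm_eq (he.trans hv.symm)]
    _ ≤ ‖u‖ ^ 4 * sinSqIntegral volume v (‖u‖ * K) := by
      gcongr
      exact sinSqIntegral_mono hE v (le_mul_of_one_le_left hK hu)
    _ = ‖u‖ ^ finrank ℝ E * sinSqIntegral volume u K := by
      rw [← sinSqIntegral_smul hu0, huv]

end

theorem integral_sin_sq_div_norm_pow_four_lower_bound_dim3 (K : ℝ) (hK : 0 < K) :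
    ∃ c C : ℝ, 0 < c ∧ 0 ≤ C ∧
      ∀ u : EuclideanSpace ℝ (Fin 3), 1 ≤ ‖u‖ →
        c * ‖u‖ - C ≤
          ∫ k in Metric.closedBall (0 : EuclideanSpace ℝ (Fin 3)) K,
            (Real.sin ⟪k, u⟫) ^ 2 / ‖k‖ ^ 4 := by
  have hE : finrank ℝ (EuclideanSpace ℝ (Fin 3)) = 3 := finrank_euclideanSpace_fin
  obtain ⟨e, he⟩ : ∃ e : EuclideanSpace ℝ (Fin 3), ‖e‖ = 1 :=
    ⟨EuclideanSpace.single 0 1, by simp⟩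
  have he0 : e ≠ 0 := norm_ne_zero_iff.1 (by simp [he])
  refine ⟨sinSqIntegral volume e K, 0, sinSqIntegral_pos (by omega) he0 hK, le_rfl,
    fun u hu ↦ ?_⟩
  have h := norm_pow_four_mul_sinSqIntegral_le (by omega) he hu hK.le
  rw [hE] at h
  rw [sub_zero, ← sinSqIntegral]
  refine le_of_mul_le_mul_left ?_ (pow_pos (one_pos.trans_le hu) 3)
  linarith
end

section
/- For D = 4: there exist constants c > 0 and C ≥ 0 such that for every u ∈ ℝ⁴ with |u| ≥ 2 and fixed cutoff K > 0, ∫_{|k| ≤ K} (sin²(k·u)/|k|⁴) dk ≥ c·log|u| - C. -/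
/-!
After a rotation taking `u` to `‖u‖ e₀`, the integrand becomes `sin² (‖u‖ k₀) / ‖k‖ⁿ⁺¹`. On the box
`(r, 2r] × [0, r]ⁿ` we have `‖k‖ ≤ (n + 2) r`, and once `r ≥ 4 / ‖u‖` the mean of `sin² (‖u‖ t)`
over `(r, 2r]` is at least `1 / 4`, so every such box contributes the same positive constant.
The ball of radius `K` contains disjoint boxes at the dyadic scales `r = K / ((n + 2) 2ᵐ)` down to
`4 / ‖u‖`, and there are about `log₂ ‖u‖` of them. Integrability near `0` follows from
`sin² x ≤ x²`.
-/

open MeasureTheory Set Metric Function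
open scoped RealInnerProductSpace

section InnerProductSpace

variable {E : Type*} [NormedAddCommGroup E] [InnerProductSpace ℝ E]

theorem sin_sq_inner_le (k u : E) : Real.sin ⟪k, u⟫ ^ 2 ≤ ‖u‖ ^ 2 * ‖k‖ ^ 2 :=
  calc Real.sin ⟪k, u⟫ ^ 2 ≤ ⟪k, u⟫ ^ 2 := Real.sin_sq_le_sq
    _ ≤ (‖k‖ * ‖u‖) ^ 2 := sq_le_sq.2 ((abs_real_inner_le_norm k u).trans (le_abs_self _))
    _ = ‖u‖ ^ 2 * ‖k‖ ^ 2 := by ring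

variable [FiniteDimensional ℝ E] [MeasurableSpace E] [BorelSpace E]

theorem locallyIntegrable_sin_sq_inner_div_norm_pow [Nontrivial E] {μ : Measure E}
    [μ.IsAddHaarMeasure] (u : E) {p : ℕ} (hp : p < Module.finrank ℝ E + 2) :
    LocallyIntegrable (fun k ↦ Real.sin ⟪k, u⟫ ^ 2 / ‖k‖ ^ p) μ := by
  have hp' : (p : ℝ) - 2 < Module.finrank ℝ E := by
    have : (p : ℝ) < Module.finrank ℝ E + 2 := by exact_mod_cast hp
    linarith
  refine locallyIntegrable_of_norm_le_rpow (C := ‖u‖ ^ 2) Module.finrank_pos hp'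
    (Filter.Eventually.of_forall fun k ↦ ?_) (by fun_prop : Measurable _).aestronglyMeasurable
  rcases eq_or_ne k 0 with rfl | hk
  · rw [inner_zero_left, Real.sin_zero, zero_pow two_ne_zero, zero_div, norm_zero]
    exact mul_nonneg (sq_nonneg _) (Real.rpow_nonneg (norm_nonneg _) _)
  have hk' : 0 < ‖k‖ := norm_pos_iff.mpr hk
  rw [Real.norm_of_nonneg (by positivity), neg_sub, Real.rpow_sub hk', Real.rpow_two,
    Real.rpow_natCast, ← mul_div_assoc]
  exact div_le_div_of_nonneg_right (sin_sq_inner_le k u) (by positivity)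

theorem setIntegral_closedBall_comp_linearIsometryEquiv (R : E ≃ₗᵢ[ℝ] E) (f : E → ℝ) (K : ℝ) :
    ∫ k in closedBall 0 K, f (R k) = ∫ k in closedBall 0 K, f k := by
  have hball : R ⁻¹' closedBall 0 K = closedBall 0 K := by
    ext k; simp
  rw [← R.measurePreserving.setIntegral_preimage_emb R.toHomeomorph.measurableEmbedding f, hball]

theorem setIntegral_closedBall_sin_sq_inner_div_norm_pow_eq {u v : E} (huv : ‖u‖ = ‖v‖)
    (p : ℕ) (K : ℝ) :
    ∫ k in closedBall 0 K, Real.sin ⟪k, u⟫ ^ 2 / ‖k‖ ^ p =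
      ∫ k in closedBall 0 K, Real.sin ⟪k, v⟫ ^ 2 / ‖k‖ ^ p := by
  set R := Submodule.reflection (ℝ ∙ (v - u))ᗮ
  have hRv : R v = u := Submodule.reflection_sub huv.symm
  rw [← setIntegral_closedBall_comp_linearIsometryEquiv R]
  congr! 3 with k
  · rw [← hRv, LinearIsometryEquiv.inner_map_map]
  · rw [LinearIsometryEquiv.norm_map]

end InnerProductSpace

def dyadicBox (n : ℕ) (r : ℝ) : Set (EuclideanSpace ℝ (Fin (n + 1))) :=
  {k | k 0 ∈ Ioc r (2 * r) ∧ ∀ i : Fin n, k i.succ ∈ Icc 0 r}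

namespace dyadicBox
variable {n : ℕ} {r : ℝ}

theorem norm_le {k : EuclideanSpace ℝ (Fin (n + 1))} (hk : k ∈ dyadicBox n r) :
    ‖k‖ ≤ (n + 2) * r := by
  obtain ⟨⟨h0l, h0r⟩, hi⟩ := hk
  have hr : 0 < r := by linarith
  have hsq : ‖k‖ ^ 2 ≤ ((n + 2) * r) ^ 2 := by
    rw [EuclideanSpace.norm_sq_eq, Fin.sum_univ_succ]
    have htail : ∑ i : Fin n, ‖k i.succ‖ ^ 2 ≤ n * r ^ 2 :=
      calc ∑ i : Fin n, ‖k i.succ‖ ^ 2 ≤ ∑ _i : Fin n, r ^ 2 :=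
            Finset.sum_le_sum fun i _ ↦ by
              rw [Real.norm_eq_abs, sq_abs]; nlinarith [(hi i).1, (hi i).2]
        _ = n * r ^ 2 := by simp
    have h0 : ‖k 0‖ ^ 2 ≤ 4 * r ^ 2 := by rw [Real.norm_eq_abs, sq_abs]; nlinarith
    nlinarith [sq_nonneg ((n : ℝ) * r), mul_nonneg (Nat.cast_nonneg (α := ℝ) n) (sq_nonneg r)]
  exact le_of_pow_le_pow_left₀ two_ne_zero (by positivity) hsq

theorem subset_closedBall : dyadicBox n r ⊆ closedBall 0 ((n + 2) * r) :=
  fun _ hk ↦ mem_closedBall_zero_iff.mpr (norm_le hk)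

theorem measurableSet : MeasurableSet (dyadicBox n r) := by
  unfold dyadicBox
  measurability

theorem disjoint {s : ℝ} (hrs : 2 * s ≤ r) : Disjoint (dyadicBox n r) (dyadicBox n s) :=
  Set.disjoint_left.mpr fun _ hr hs ↦ by linarith [hr.1.1, hs.1.2]

end dyadicBox

theorem setIntegral_dyadicBox (n : ℕ) {r : ℝ} (hr : 0 ≤ r) (g : ℝ → ℝ) :
    ∫ k in dyadicBox n r, g (k 0) = r ^ n * ∫ t in Ioc r (2 * r), g t := by
  let Φ := (MeasurableEquiv.toLp 2 (Fin (n + 1) → ℝ)).symm.trans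
    (MeasurableEquiv.piFinSuccAbove (fun _ ↦ ℝ) 0)
  have hΦ : MeasurePreserving Φ :=
    (EuclideanSpace.volume_preserving_symm_measurableEquiv_toLp _).trans
      (volume_preserving_piFinSuccAbove (fun _ ↦ ℝ) 0)
  have hbox : dyadicBox n r = Φ ⁻¹' (Ioc r (2 * r) ×ˢ univ.pi fun _ ↦ Icc 0 r) := by
    ext k
    simp only [dyadicBox, mem_preimage, mem_prod, mem_univ_pi, mem_ofPred_eq]
    rfl
  rw [hbox]
  refine (hΦ.setIntegral_preimage_emb Φ.measurableEmbedding (fun p ↦ g p.1) _).trans ?_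
  rw [Measure.volume_eq_prod, ← Measure.prod_restrict, integral_fun_fst]
  simp only [Measure.real, Measure.restrict_apply MeasurableSet.univ, univ_inter, volume_pi_pi,
    Real.volume_Icc, sub_zero, Finset.prod_const, Finset.card_univ, Fintype.card_fin,
    ENNReal.toReal_pow, ENNReal.toReal_ofReal hr, smul_eq_mul]

theorem le_integral_sin_sq_Ioc {a r : ℝ} (ha : 0 < a) (hr : 4 / a ≤ r) :
    r / 4 ≤ ∫ t in Ioc r (2 * r), Real.sin (a * t) ^ 2 := by
  have har : 4 ≤ a * r := by rwa [div_le_iff₀' ha] at hr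
  rw [← intervalIntegral.integral_of_le (by nlinarith),
    intervalIntegral.integral_comp_mul_left (fun t ↦ Real.sin t ^ 2) ha.ne', integral_sin_sq,
    smul_eq_mul, le_inv_mul_iff₀ ha]
  linarith [Real.sin_two_mul (a * r), Real.sin_two_mul (a * (2 * r)),
    Real.neg_one_le_sin (2 * (a * r)), Real.sin_le_one (2 * (a * (2 * r)))]

theorem le_setIntegral_dyadicBox {n : ℕ} {a r : ℝ} (ha : 0 < a) (hr : 4 / a ≤ r) :
    1 / (4 * (n + 2) ^ (n + 1)) ≤
      ∫ k in dyadicBox n r, Real.sin ⟪k, EuclideanSpace.single 0 a⟫ ^ 2 / ‖k‖ ^ (n + 1) := by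
  have hr0 : 0 < r := lt_of_lt_of_le (by positivity) hr
  have hint : IntegrableOn (fun k ↦ Real.sin ⟪k, EuclideanSpace.single 0 a⟫ ^ 2 / ‖k‖ ^ (n + 1))
      (dyadicBox n r) :=
    ((locallyIntegrable_sin_sq_inner_div_norm_pow _ (by simp)).integrableOn_isCompact
      (isCompact_closedBall _ _)).mono_set dyadicBox.subset_closedBall
  have hpt : ∀ k ∈ dyadicBox n r, Real.sin (a * k 0) ^ 2 / ((n + 2) * r) ^ (n + 1) ≤
      Real.sin ⟪k, EuclideanSpace.single 0 a⟫ ^ 2 / ‖k‖ ^ (n + 1) := fun k hk ↦ by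
    have hk0 : 0 < ‖k‖ := calc
      0 < k 0 := hr0.trans hk.1.1
      _ ≤ ‖k 0‖ := Real.le_norm_self _
      _ ≤ ‖k‖ := PiLp.norm_apply_le k 0
    rw [EuclideanSpace.inner_single_right, starRingEnd_apply, star_trivial]
    gcongr
    exact dyadicBox.norm_le hk
  calc 1 / (4 * (n + 2) ^ (n + 1))
      = r ^ n * (r / 4) / ((n + 2) * r) ^ (n + 1) := by
        rw [mul_pow, pow_succ r]; field_simp
    _ ≤ r ^ n * (∫ t in Ioc r (2 * r), Real.sin (a * t) ^ 2) / ((n + 2) * r) ^ (n + 1) := by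
      gcongr
      exact le_integral_sin_sq_Ioc ha hr
    _ = ∫ k in dyadicBox n r, Real.sin (a * k 0) ^ 2 / ((n + 2) * r) ^ (n + 1) := by
      rw [integral_div, setIntegral_dyadicBox n hr0.le fun t ↦ Real.sin (a * t) ^ 2]
    _ ≤ _ := integral_mono_of_nonneg (Filter.Eventually.of_forall fun _ ↦ by positivity) hint
      (ae_restrict_of_forall_mem dyadicBox.measurableSet hpt)

theorem sum_setIntegral_le_setIntegral {X ι : Type*} [MeasurableSpace X] {μ : Measure X}
    {f : X → ℝ} {s : ι → Set X} {t : Set X} (I : Finset ι) (hf : 0 ≤ᵐ[μ.restrict t] f)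
    (hft : IntegrableOn f t μ) (hs : ∀ i ∈ I, MeasurableSet (s i)) (hst : ∀ i ∈ I, s i ⊆ t)
    (hdisj : (I : Set ι).Pairwise (Disjoint on s)) :
    ∑ i ∈ I, ∫ x in s i, f x ∂μ ≤ ∫ x in t, f x ∂μ := by
  rw [← integral_biUnion_finset I hs hdisj fun i hi ↦ hft.mono_set (hst i hi)]
  exact setIntegral_mono_set hft hf (Filter.Eventually.of_forall (iUnion₂_subset hst))

theorem Real.log_lt_natLog_floor_add_one_mul_log {b : ℕ} (hb : 1 < b) {x : ℝ} (hx : 0 < x) :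
    Real.log x < (Nat.log b ⌊x⌋₊ + 1) * Real.log b := by
  have hpow : x < (b : ℝ) ^ (Nat.log b ⌊x⌋₊ + 1) := by
    have := Nat.lt_pow_succ_log_self hb ⌊x⌋₊
    calc x < ⌊x⌋₊ + 1 := Nat.lt_floor_add_one x
      _ ≤ (b : ℝ) ^ (Nat.log b ⌊x⌋₊ + 1) := by exact_mod_cast this
  calc Real.log x < Real.log ((b : ℝ) ^ (Nat.log b ⌊x⌋₊ + 1)) := Real.log_lt_log hx hpow
    _ = (Nat.log b ⌊x⌋₊ + 1) * Real.log b := by rw [Real.log_pow]; push_cast; ring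

theorem natLog_floor_div_le_setIntegral_closedBall {n : ℕ} {a K : ℝ} (ha : 0 < a) (hK : 0 < K) :
    (Nat.log 2 ⌊a * (K / (n + 2)) / 4⌋₊ : ℝ) / (4 * (n + 2) ^ (n + 1)) ≤
      ∫ k in closedBall (0 : EuclideanSpace ℝ (Fin (n + 1))) K,
        Real.sin ⟪k, EuclideanSpace.single 0 a⟫ ^ 2 / ‖k‖ ^ (n + 1) := by
  set ρ := K / (n + 2)
  set N := Nat.log 2 ⌊a * ρ / 4⌋₊
  have hscale : ∀ m < N, 4 / a ≤ ρ / 2 ^ m := fun m hm ↦ by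
    have hfloor : ⌊a * ρ / 4⌋₊ ≠ 0 := fun h ↦ by simp [N, h] at hm
    have h2m : ((2 ^ m : ℕ) : ℝ) ≤ a * ρ / 4 :=
      (Nat.cast_le.mpr (Nat.pow_le_of_le_log hfloor hm.le)).trans (Nat.floor_le (by positivity))
    rw [div_le_div_iff₀ ha (by positivity)]
    push_cast at h2m
    linarith
  have hsub : ∀ m ∈ Finset.range N, dyadicBox n (ρ / 2 ^ m) ⊆ closedBall 0 K := fun m _ ↦ by
    refine dyadicBox.subset_closedBall.trans (closedBall_subset_closedBall ?_)
    calc (n + 2) * (ρ / 2 ^ m) = K / 2 ^ m := by simp only [ρ]; field_simp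
      _ ≤ K := div_le_self hK.le (one_le_pow₀ one_le_two)
  have hdisj : ((Finset.range N : Finset ℕ) : Set ℕ).Pairwise
      (Disjoint on fun m ↦ dyadicBox n (ρ / 2 ^ m)) := by
    refine Pairwise.set_pairwise ((pairwise_disjoint_on _).mpr fun m m' hmm' ↦
      dyadicBox.disjoint ?_) _
    rw [mul_div_assoc', div_le_div_iff₀ (by positivity) (by positivity)]
    calc 2 * ρ * 2 ^ m = ρ * 2 ^ (m + 1) := by ring
      _ ≤ ρ * 2 ^ m' := by gcongr; exacts [one_le_two, hmm']
  have hint := (locallyIntegrable_sin_sq_inner_div_norm_pow (μ := volume)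
    (EuclideanSpace.single (0 : Fin (n + 1)) a) (p := n + 1) (by simp)).integrableOn_isCompact
    (isCompact_closedBall (0 : EuclideanSpace ℝ (Fin (n + 1))) K)
  calc (N : ℝ) / (4 * (n + 2) ^ (n + 1))
      = ∑ m ∈ Finset.range N, 1 / (4 * ((n : ℝ) + 2) ^ (n + 1)) := by
        rw [Finset.sum_const, Finset.card_range, nsmul_eq_mul, mul_one_div]
    _ ≤ ∑ m ∈ Finset.range N, ∫ k in dyadicBox n (ρ / 2 ^ m),
          Real.sin ⟪k, EuclideanSpace.single 0 a⟫ ^ 2 / ‖k‖ ^ (n + 1) :=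
      Finset.sum_le_sum fun m hm ↦ le_setIntegral_dyadicBox ha (hscale m (Finset.mem_range.mp hm))
    _ ≤ _ := sum_setIntegral_le_setIntegral _ (Filter.Eventually.of_forall fun _ ↦ by positivity)
      hint (fun _ _ ↦ dyadicBox.measurableSet) hsub hdisj

theorem exists_log_le_setIntegral_sin_sq_inner_div_norm_pow (n : ℕ) {K : ℝ} (hK : 0 < K) :
    ∃ c C : ℝ, 0 < c ∧ 0 ≤ C ∧ ∀ u : EuclideanSpace ℝ (Fin (n + 1)),
      c * Real.log ‖u‖ - C ≤
        ∫ k in closedBall (0 : EuclideanSpace ℝ (Fin (n + 1))) K,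
          Real.sin ⟪k, u⟫ ^ 2 / ‖k‖ ^ (n + 1) := by
  set c₀ : ℝ := 1 / (4 * (n + 2) ^ (n + 1))
  set L := Real.log (K / (n + 2) / 4)
  have hlog2 : 0 < Real.log 2 := Real.log_pos one_lt_two
  refine ⟨c₀ / Real.log 2, c₀ * (|L| / Real.log 2 + 1), by positivity, by positivity, fun u ↦ ?_⟩
  rcases eq_or_ne u 0 with rfl | hu
  · rw [norm_zero, Real.log_zero, mul_zero, zero_sub]
    exact (neg_nonpos.mpr (by positivity)).trans
      (setIntegral_nonneg measurableSet_closedBall fun _ _ ↦ by positivity)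
  set a := ‖u‖
  have ha : 0 < a := norm_pos_iff.mpr hu
  rw [setIntegral_closedBall_sin_sq_inner_div_norm_pow_eq
    (v := EuclideanSpace.single (0 : Fin (n + 1)) a) (by simp [a])]
  refine le_trans ?_ (natLog_floor_div_le_setIntegral_closedBall ha hK)
  have hcount : (Real.log a + L) / Real.log 2 < Nat.log 2 ⌊a * (K / (n + 2)) / 4⌋₊ + 1 := by
    rw [div_lt_iff₀ hlog2, ← Real.log_mul ha.ne' (by positivity), ← mul_div_assoc]
    exact_mod_cast Real.log_lt_natLog_floor_add_one_mul_log one_lt_two (by positivity)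
  calc c₀ / Real.log 2 * Real.log a - c₀ * (|L| / Real.log 2 + 1)
      = c₀ * (Real.log a / Real.log 2 + -|L| / Real.log 2 - 1) := by ring
    _ ≤ c₀ * (Real.log a / Real.log 2 + L / Real.log 2 - 1) := by gcongr; exact neg_abs_le L
    _ ≤ c₀ * Nat.log 2 ⌊a * (K / (n + 2)) / 4⌋₊ := by gcongr; rw [← add_div]; linarith
    _ = _ := by ring

theorem integral_sin_sq_div_norm_pow_four_lower_bound_dim4 (K : ℝ) (hK : 0 < K) :
    ∃ c C : ℝ, 0 < c ∧ 0 ≤ C ∧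
      ∀ u : EuclideanSpace ℝ (Fin 4), 2 ≤ ‖u‖ →
        c * Real.log ‖u‖ - C ≤
          ∫ k in Metric.closedBall (0 : EuclideanSpace ℝ (Fin 4)) K,
            (Real.sin ⟪k, u⟫) ^ 2 / ‖k‖ ^ 4 := by
  obtain ⟨c, C, hc, hC, hbound⟩ := exists_log_le_setIntegral_sin_sq_inner_div_norm_pow 3 hK
  exact ⟨c, C, hc, hC, fun u _ ↦ hbound u⟩
end
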